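/- arXiv:2601.14355 — 3 statements merged into one kernel-verified Lean document; each statement's English description precedes it below -/
import Mathlib

section
/- Fix n ≥ 1 and let H_n denote the real vector space of n×n complex Hermitian matrices, with positive semidefinite cone H_n⁺. Let C ⊆ H_n be a convex cone (closed under addition and under multiplication by nonnegative reals). If C contains no nonzero positive semidefinite matrix (i.e. C ∩ H_n⁺ = {0}), then there exists an n×n complex matrix ρ that is positive semidefinite with trace 1 such that for every G ∈ C the real part of Tr(ρ · G) is ≤ 0. -/
open scoped ComplexOrder

namespace NoArbAux

open Matrix Finset

attribute [local instance] Matrix.normedAddCommGroup Matrix.normedSpace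

variable {n : ℕ}

/-- Hermitian basis matrices (real part directions). -/
noncomputable def Hm (i j : Fin n) : Matrix (Fin n) (Fin n) ℂ :=
  Matrix.single i j 1 + Matrix.single j i 1

/-- Hermitian basis matrices (imaginary part directions). -/
noncomputable def Km (i j : Fin n) : Matrix (Fin n) (Fin n) ℂ :=
  Matrix.single i j Complex.I - Matrix.single j i Complex.I

lemma Hm_symm (i j : Fin n) : Hm i j = Hm j i := add_comm _ _

lemma Km_antisymm (i j : Fin n) : Km j i = - Km i j := by
  simp [Km]

lemma key (A : Matrix (Fin n) (Fin n) ℂ) :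
    ∑ i : Fin n, ∑ j : Fin n, ((A i j).re • Hm i j + (A i j).im • Km i j) = A + Aᴴ := by
  ext k l
  simp only [Matrix.sum_apply, Matrix.add_apply, Matrix.smul_apply, Hm, Km,
    Matrix.sub_apply, Matrix.single, Matrix.of_apply, smul_add, smul_sub, smul_ite, smul_zero,
    ite_and, Matrix.conjTranspose_apply]
  rw [Finset.sum_comm]
  simp only [Finset.sum_add_distrib, Finset.sum_sub_distrib, Finset.sum_ite_eq,
    Finset.sum_ite_eq', Finset.mem_univ, if_true]
  apply Complex.ext <;>
    simp [Complex.real_smul, Complex.add_re, Complex.add_im] <;> ring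

lemma trace_re (M A : Matrix (Fin n) (Fin n) ℂ) :
    ((M * A).trace).re = ∑ k : Fin n, ∑ j : Fin n, (M k j * A j k).re := by
  simp [Matrix.trace, Matrix.diag, Matrix.mul_apply, Complex.re_sum]

lemma dot_eq_trace (M : Matrix (Fin n) (Fin n) ℂ) (x : Fin n → ℂ) :
    star x ⬝ᵥ M.mulVec x = (M * vecMulVec x (star x)).trace := by
  simp only [Matrix.trace, Matrix.diag, Matrix.mul_apply, vecMulVec_apply, dotProduct,
    Matrix.mulVec, Pi.star_apply, Finset.mul_sum, Finset.sum_mul]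
  refine Finset.sum_congr rfl fun i _ => Finset.sum_congr rfl fun j _ => by ring

lemma vecMulVec_posSemidef (x : Fin n → ℂ) : (vecMulVec x (star x)).PosSemidef := by
  have h : vecMulVec x (star x) = (replicateRow Unit (star x))ᴴ * replicateRow Unit (star x) := by
    rw [conjTranspose_replicateRow, star_star, ← vecMulVec_eq Unit]
  rw [h]
  exact posSemidef_conjTranspose_mul_self _

lemma herm_dot_im {M : Matrix (Fin n) (Fin n) ℂ} (hM : M.IsHermitian) (x : Fin n → ℂ) :
    (star x ⬝ᵥ M.mulVec x).im = 0 := by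
  rw [← Complex.conj_eq_iff_im]
  have h1 : star (star x ⬝ᵥ M.mulVec x) = star (M.mulVec x) ⬝ᵥ x := by
    rw [Matrix.star_dotProduct, star_star]
  rw [show (starRingEnd ℂ) (star x ⬝ᵥ M.mulVec x) = star (star x ⬝ᵥ M.mulVec x) from rfl, h1,
    Matrix.star_mulVec, hM.eq, ← Matrix.dotProduct_mulVec]

lemma psd_smul {M : Matrix (Fin n) (Fin n) ℂ} (hM : M.PosSemidef) {r : ℝ} (hr : 0 ≤ r) :
    (r • M).PosSemidef := by
  refine posSemidef_iff_dotProduct_mulVec.mpr ⟨?_, fun x => ?_⟩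
  · show (r • M)ᴴ = r • M
    rw [conjTranspose_smul, star_trivial, hM.1.eq]
  · rw [smul_mulVec, dotProduct_smul]
    have h := hM.dotProduct_mulVec_nonneg x
    rw [Complex.le_def] at h ⊢
    constructor
    · simpa [Complex.real_smul] using mul_nonneg hr h.1
    · have hz : (star x ⬝ᵥ M *ᵥ x).im = 0 := by simpa using h.2.symm
      simp [Complex.real_smul, Complex.mul_im, hz]

lemma pd_smul {M : Matrix (Fin n) (Fin n) ℂ} (hM : M.PosDef) {r : ℝ} (hr : 0 < r) :
    (r • M).PosDef := by
  refine posDef_iff_dotProduct_mulVec.mpr ⟨?_, fun x hx => ?_⟩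
  · show (r • M)ᴴ = r • M
    rw [conjTranspose_smul, star_trivial, hM.1.eq]
  · rw [smul_mulVec, dotProduct_smul]
    have h := hM.dotProduct_mulVec_pos hx
    rw [Complex.lt_def] at h ⊢
    constructor
    · simpa [Complex.real_smul] using mul_pos hr h.1
    · have hz : (star x ⬝ᵥ M *ᵥ x).im = 0 := by simpa using h.2.symm
      simp [Complex.real_smul, Complex.mul_im, hz]

/-- Hermitian part. -/
noncomputable def hp (A : Matrix (Fin n) (Fin n) ℂ) : Matrix (Fin n) (Fin n) ℂ :=
  (1 / 2 : ℝ) • (A + Aᴴ)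

lemma hp_isHermitian (A : Matrix (Fin n) (Fin n) ℂ) : (hp A).IsHermitian := by
  show (hp A)ᴴ = hp A
  simp [hp, conjTranspose_smul, add_comm]

lemma hp_of_isHermitian {A : Matrix (Fin n) (Fin n) ℂ} (hA : A.IsHermitian) : hp A = A := by
  rw [hp, hA.eq, ← two_smul ℝ A, smul_smul]
  norm_num

lemma hp_sub (A B : Matrix (Fin n) (Fin n) ℂ) : hp A - hp B = hp (A - B) := by
  simp only [hp, conjTranspose_sub, ← smul_sub]
  congr 1
  abel

lemma hp_add (A B : Matrix (Fin n) (Fin n) ℂ) : hp (A + B) = hp A + hp B := by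
  simp only [hp, conjTranspose_add, ← smul_add]
  congr 1
  abel

lemma hp_real_smul (r : ℝ) (A : Matrix (Fin n) (Fin n) ℂ) : hp (r • A) = r • hp A := by
  simp only [hp, conjTranspose_smul, star_trivial, ← smul_add, smul_comm r]

lemma norm_hp_le (A : Matrix (Fin n) (Fin n) ℂ) : ‖hp A‖ ≤ ‖A‖ := by
  rw [hp, norm_smul]
  have h := norm_add_le A Aᴴ
  rw [Matrix.norm_conjTranspose] at h
  simp only [Real.norm_eq_abs]
  rw [abs_of_nonneg (by norm_num : (0:ℝ) ≤ 1/2)]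
  linarith

lemma quad_bound (B : Matrix (Fin n) (Fin n) ℂ) (x : Fin n → ℂ) :
    |(star x ⬝ᵥ B.mulVec x).re| ≤ (n : ℝ)^2 * ‖B‖ * ‖x‖^2 := by
  have h1 : |(star x ⬝ᵥ B.mulVec x).re| ≤ ‖star x ⬝ᵥ B.mulVec x‖ := Complex.abs_re_le_norm _
  refine h1.trans ?_
  simp only [dotProduct, Matrix.mulVec, Pi.star_apply]
  calc ‖∑ i, star (x i) * ∑ j, B i j * x j‖
      ≤ ∑ i : Fin n, ‖star (x i) * ∑ j, B i j * x j‖ := norm_sum_le _ _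
    _ ≤ ∑ i : Fin n, ∑ j : Fin n, ‖x i‖ * (‖B i j‖ * ‖x j‖) := by
        refine Finset.sum_le_sum fun i _ => ?_
        rw [norm_mul, norm_star]
        calc ‖x i‖ * ‖∑ j, B i j * x j‖
            ≤ ‖x i‖ * ∑ j, ‖B i j * x j‖ :=
              mul_le_mul_of_nonneg_left (norm_sum_le _ _) (norm_nonneg _)
          _ = ∑ j, ‖x i‖ * (‖B i j‖ * ‖x j‖) := by
              rw [Finset.mul_sum]
              exact Finset.sum_congr rfl fun j _ => by rw [norm_mul]
    _ ≤ ∑ _i : Fin n, ∑ _j : Fin n, ‖x‖ * (‖B‖ * ‖x‖) := by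
        refine Finset.sum_le_sum fun i _ => Finset.sum_le_sum fun j _ => ?_
        have hxi : ‖x i‖ ≤ ‖x‖ := norm_le_pi_norm x i
        have hxj : ‖x j‖ ≤ ‖x‖ := norm_le_pi_norm x j
        have hB : ‖B i j‖ ≤ ‖B‖ := Matrix.norm_entry_le_entrywise_sup_norm B
        have h2 : ‖B i j‖ * ‖x j‖ ≤ ‖B‖ * ‖x‖ :=
          mul_le_mul hB hxj (norm_nonneg _) (norm_nonneg _)
        exact mul_le_mul hxi h2 (mul_nonneg (norm_nonneg _) (norm_nonneg _)) (norm_nonneg _)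
    _ = (n : ℝ)^2 * ‖B‖ * ‖x‖^2 := by
        simp [Finset.sum_const, Finset.card_univ]
        ring

lemma quad_cont (A : Matrix (Fin n) (Fin n) ℂ) :
    Continuous fun x : Fin n → ℂ => (star x ⬝ᵥ A.mulVec x).re := by
  simp only [dotProduct, Matrix.mulVec, Pi.star_apply]
  exact Complex.continuous_re.comp <| continuous_finset_sum _ fun i _ =>
    ((continuous_apply i).star.mul (continuous_finset_sum _ fun j _ =>
      continuous_const.mul (continuous_apply j)))

lemma posdef_lower (hn : 1 ≤ n) {A : Matrix (Fin n) (Fin n) ℂ} (hA : A.PosDef) :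
    ∃ ε : ℝ, 0 < ε ∧ ∀ x : Fin n → ℂ, ε * ‖x‖^2 ≤ (star x ⬝ᵥ A.mulVec x).re := by
  haveI : Nonempty (Fin n) := ⟨⟨0, hn⟩⟩
  have hne : (Metric.sphere (0 : Fin n → ℂ) 1).Nonempty :=
    NormedSpace.sphere_nonempty.2 zero_le_one
  obtain ⟨z, hz, hmin⟩ := (isCompact_sphere (0 : Fin n → ℂ) 1).exists_isMinOn hne
    ((quad_cont A).continuousOn)
  have hz1 : ‖z‖ = 1 := by simpa using hz
  have hz0 : z ≠ 0 := by
    intro h; rw [h] at hz1; simp at hz1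
  refine ⟨(star z ⬝ᵥ A.mulVec z).re, hA.re_dotProduct_pos hz0, fun x => ?_⟩
  rcases eq_or_ne x 0 with rfl | hx
  · simp
  · set c : ℝ := ‖x‖ with hc
    have hcpos : 0 < c := norm_pos_iff.2 hx
    set u : Fin n → ℂ := c⁻¹ • x with hu
    have hu1 : ‖u‖ = 1 := by
      rw [hu, norm_smul, norm_inv, Real.norm_eq_abs, abs_of_pos hcpos, ← hc,
        inv_mul_cancel₀ hcpos.ne']
    have hxu : x = c • u := by
      rw [hu, smul_smul, mul_inv_cancel₀ hcpos.ne', one_smul]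
    have hmem : u ∈ Metric.sphere (0 : Fin n → ℂ) 1 := by simpa using hu1
    have hmin' : (star z ⬝ᵥ A.mulVec z).re ≤ (star u ⬝ᵥ A.mulVec u).re := hmin hmem
    have hval : (star x ⬝ᵥ A.mulVec x).re = c * c * (star u ⬝ᵥ A.mulVec u).re := by
      rw [hxu, Matrix.mulVec_smul, star_smul, star_trivial, smul_dotProduct, dotProduct_smul,
        smul_smul]
      simp [Complex.real_smul, Complex.mul_re]
    rw [hval]
    have : ‖x‖^2 = c * c := by rw [← hc]; ring
    rw [this]
    nlinarith [hA.re_dotProduct_pos hz0]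

lemma s_isOpen (hn : 1 ≤ n) :
    IsOpen {A : Matrix (Fin n) (Fin n) ℂ | (hp A).PosDef} := by
  refine Metric.isOpen_iff.mpr ?_
  intro A hA
  obtain ⟨ε, hε, hlow⟩ := posdef_lower hn (hA : (hp A).PosDef)
  refine ⟨ε / ((n : ℝ)^2 + 1), by positivity, fun B hB => ?_⟩
  rw [Metric.mem_ball, dist_eq_norm] at hB
  have hnormd : ‖hp B - hp A‖ ≤ ‖B - A‖ := by
    rw [hp_sub]; exact norm_hp_le _
  refine posDef_iff_dotProduct_mulVec.mpr ⟨hp_isHermitian B, fun x hx => ?_⟩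
  rw [Complex.lt_def]
  constructor
  · have hdecomp : (star x ⬝ᵥ (hp B).mulVec x).re
        = (star x ⬝ᵥ (hp A).mulVec x).re + (star x ⬝ᵥ (hp B - hp A).mulVec x).re := by
      rw [Matrix.sub_mulVec, dotProduct_sub, Complex.sub_re]
      ring
    rw [hdecomp]
    have h1 := hlow x
    have h2 := quad_bound (hp B - hp A) x
    have h3 : (n : ℝ)^2 * ‖hp B - hp A‖ * ‖x‖^2 ≤ (n : ℝ)^2 * (ε / ((n : ℝ)^2 + 1)) * ‖x‖^2 := by
      gcongr
      exact hnormd.trans hB.le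
    have hxpos : 0 < ‖x‖^2 := pow_pos (norm_pos_iff.2 hx) 2
    have habs := (abs_le.mp h2).1
    have hfrac : (n : ℝ)^2 * (ε / ((n : ℝ)^2 + 1)) < ε := by
      rw [div_eq_inv_mul]
      have hpos : (0:ℝ) < (n : ℝ)^2 + 1 := by positivity
      rw [show (n:ℝ)^2 * (((n:ℝ)^2 + 1)⁻¹ * ε) = ((n:ℝ)^2 / ((n:ℝ)^2 + 1)) * ε by ring]
      have : (n:ℝ)^2 / ((n:ℝ)^2 + 1) < 1 := by
        rw [div_lt_one hpos]; linarith
      nlinarith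
    simp only [Complex.zero_re]
    nlinarith [mul_pos (sub_pos.2 hfrac) hxpos]
  · exact (herm_dot_im (hp_isHermitian B) x).symm

end NoArbAux

open Matrix NoArbAux

attribute [local instance] Matrix.normedAddCommGroup Matrix.normedSpace

/-- Finite-dimensional no-arbitrage separation theorem: if a convex cone `C` of
Hermitian `n × n` matrices contains no nonzero positive semidefinite matrix, then
there exists a density matrix `ρ` (positive semidefinite with trace `1`) such that
`Re (Tr (ρ * G)) ≤ 0` for every `G ∈ C`. -/
theorem stmt0 (n : ℕ) (hn : 1 ≤ n) (C : Set (Matrix (Fin n) (Fin n) ℂ))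
    (hherm : ∀ G ∈ C, G.IsHermitian)
    (hadd : ∀ G₁ ∈ C, ∀ G₂ ∈ C, G₁ + G₂ ∈ C)
    (hsmul : ∀ r : ℝ, 0 ≤ r → ∀ G ∈ C, r • G ∈ C)
    (hNA : ∀ G ∈ C, G.PosSemidef → G = 0) :
    ∃ ρ : Matrix (Fin n) (Fin n) ℂ, ρ.PosSemidef ∧ ρ.trace = 1 ∧
      ∀ G ∈ C, ((ρ * G).trace).re ≤ 0 := by
  classical
  rcases C.eq_empty_or_nonempty with rfl | ⟨G₀, hG₀⟩
  · refine ⟨((n : ℝ)⁻¹) • 1, psd_smul Matrix.PosSemidef.one (by positivity), ?_, by simp⟩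
    rw [Matrix.trace_smul, Matrix.trace_one, Fintype.card_fin]
    have hn0 : (n : ℝ) ≠ 0 := by positivity
    rw [Complex.real_smul]
    push_cast
    field_simp
  · have h0C : (0 : Matrix (Fin n) (Fin n) ℂ) ∈ C := by
      simpa using hsmul 0 le_rfl G₀ hG₀
    -- the open convex set of matrices with positive definite hermitian part
    set s : Set (Matrix (Fin n) (Fin n) ℂ) := {A | (hp A).PosDef} with hs
    have hsopen : IsOpen s := s_isOpen hn
    have hsconv : Convex ℝ s := by
      intro A hA B hB a b ha hb hab
      show (hp (a • A + b • B)).PosDef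
      rw [hp_add, hp_real_smul, hp_real_smul]
      rcases ha.eq_or_lt with rfl | ha'
      · rw [zero_smul, zero_add]
        have hb1 : b = 1 := by linarith
        rw [hb1, one_smul]; exact hB
      · rcases hb.eq_or_lt with rfl | hb'
        · rw [zero_smul, add_zero]
          have ha1 : a = 1 := by linarith
          rw [ha1, one_smul]; exact hA
        · exact (pd_smul hA ha').add_posSemidef ((pd_smul hB hb').posSemidef)
    have hCconv : Convex ℝ C := by
      intro A hA B hB a b ha hb _
      exact hadd _ (hsmul a ha A hA) _ (hsmul b hb B hB)
    have hdisj : Disjoint s C := by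
      rw [Set.disjoint_left]
      intro A hAs hAC
      have hAh : A.IsHermitian := hherm A hAC
      have hApd : A.PosDef := by
        have := hAs
        rw [hs] at this
        simpa [hp_of_isHermitian hAh] using this
      have hA0 : A = 0 := hNA A hAC hApd.posSemidef
      rw [hA0] at hApd
      set x : Fin n → ℂ := Pi.single ⟨0, hn⟩ 1 with hx
      have hx0 : x ≠ 0 := by
        intro h
        have := congrFun h ⟨0, hn⟩
        simp [hx] at this
      have := hApd.dotProduct_mulVec_pos hx0
      simp at this
    obtain ⟨f, u, hfs, hfC⟩ := geometric_hahn_banach_open hsconv hsopen hCconv hdisj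
    have hu0 : u ≤ 0 := by simpa using hfC 0 h0C
    have hfC0 : ∀ G ∈ C, 0 ≤ f G := by
      intro G hG
      by_contra h
      push_neg at h
      set t : ℝ := (u - 1) / (f G) with ht
      have htpos : 0 ≤ t := by
        rw [ht, ← neg_div_neg_eq]
        apply div_nonneg <;> linarith
      have := hfC _ (hsmul t htpos G hG)
      rw [f.map_smul, smul_eq_mul, ht, div_mul_cancel₀ _ h.ne] at this
      linarith
    have h1s : (1 : Matrix (Fin n) (Fin n) ℂ) ∈ s := by
      show (hp (1 : Matrix (Fin n) (Fin n) ℂ)).PosDef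
      rw [hp_of_isHermitian (Matrix.isHermitian_one)]
      exact Matrix.PosDef.one
    have hf1 : f 1 < 0 := lt_of_lt_of_le (hfs 1 h1s) hu0
    have hfPSD : ∀ P : Matrix (Fin n) (Fin n) ℂ, P.PosSemidef → f P ≤ 0 := by
      intro P hP
      by_contra h
      push_neg at h
      set ε : ℝ := f P / (- f 1) with hε
      have hεpos : 0 < ε := div_pos h (by linarith)
      have hmem : P + ε • 1 ∈ s := by
        show (hp (P + ε • (1 : Matrix (Fin n) (Fin n) ℂ))).PosDef
        have hherm' : (P + ε • (1 : Matrix (Fin n) (Fin n) ℂ)).IsHermitian := by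
          show (P + ε • (1 : Matrix (Fin n) (Fin n) ℂ))ᴴ = _
          rw [conjTranspose_add, conjTranspose_smul, star_trivial, hP.1.eq,
            Matrix.conjTranspose_one]
        rw [hp_of_isHermitian hherm']
        exact Matrix.PosDef.posSemidef_add hP (pd_smul Matrix.PosDef.one hεpos)
      have := hfs _ hmem
      rw [map_add, f.map_smul, smul_eq_mul] at this
      have hcalc : f P + ε * f 1 = 0 := by
        have hne : f 1 ≠ 0 := ne_of_lt hf1
        rw [hε, div_mul_eq_mul_div, div_neg, mul_div_assoc, div_self hne, mul_one]
        ring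
      linarith
    -- construct the representing matrix
    set M : Matrix (Fin n) (Fin n) ℂ :=
      Matrix.of fun k l => ((-(1/2) * f (Hm k l) : ℝ) : ℂ) + (-(1/2) * f (Km k l) : ℝ) * Complex.I
      with hM
    have hMapp : ∀ k l, M k l
        = ((-(1/2) * f (Hm k l) : ℝ) : ℂ) + (-(1/2) * f (Km k l) : ℝ) * Complex.I :=
      fun k l => rfl
    have hRe : ∀ A : Matrix (Fin n) (Fin n) ℂ, A.IsHermitian → ((M * A).trace).re = - f A := by
      intro A hA
      rw [trace_re]
      have h2 : ∀ k j : Fin n, (M k j * A j k).re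
          = -(1/2) * f ((A k j).re • Hm k j + (A k j).im • Km k j) := by
        intro k j
        have hAjk : A j k = (starRingEnd ℂ) (A k j) := by
          conv_lhs => rw [← hA.eq]
          rw [Matrix.conjTranspose_apply, Complex.star_def]
        rw [hAjk, hMapp, map_add, _root_.map_smul, _root_.map_smul, smul_eq_mul, smul_eq_mul]
        simp only [Complex.add_re, Complex.add_im, Complex.mul_re, Complex.mul_im,
          Complex.ofReal_re, Complex.ofReal_im, Complex.I_re, Complex.I_im,
          Complex.conj_re, Complex.conj_im]
        ring
      simp_rw [h2, ← Finset.mul_sum, ← map_sum]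
      rw [key A, hA.eq, map_add]
      ring
    have hMherm : M.IsHermitian := by
      apply Matrix.ext
      intro k l
      rw [Matrix.conjTranspose_apply, hMapp, hMapp]
      apply Complex.ext
      · simp [Hm_symm l k]
      · have : f (Km l k) = - f (Km k l) := by rw [Km_antisymm k l, map_neg]
        simp [this]
    have hMpsd : M.PosSemidef := by
      refine posSemidef_iff_dotProduct_mulVec.mpr ⟨hMherm, fun x => ?_⟩
      have him := herm_dot_im hMherm x
      have hre : 0 ≤ (star x ⬝ᵥ M.mulVec x).re := by
        rw [dot_eq_trace, hRe _ (vecMulVec_posSemidef x).isHermitian]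
        have := hfPSD _ (vecMulVec_posSemidef x)
        linarith
      rw [Complex.le_def]
      exact ⟨by simpa using hre, by simpa using him.symm⟩
    set c : ℝ := - f 1 with hc
    have hcpos : 0 < c := by rw [hc]; linarith
    have htrre : (M.trace).re = c := by
      have := hRe 1 Matrix.isHermitian_one
      rw [mul_one] at this
      rw [this, hc]
    have htrim : (M.trace).im = 0 := by
      rw [Matrix.trace]
      rw [Complex.im_sum]
      refine Finset.sum_eq_zero fun k _ => ?_
      have : (starRingEnd ℂ) (M k k) = M k k := by
        conv_rhs => rw [← hMherm.eq]
        rfl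
      rw [Complex.conj_eq_iff_im] at this
      exact this
    have htr : M.trace = (c : ℂ) := by
      apply Complex.ext
      · simpa using htrre
      · simpa using htrim
    refine ⟨(c⁻¹ : ℝ) • M, psd_smul hMpsd (by positivity), ?_, ?_⟩
    · rw [Matrix.trace_smul, htr, Complex.real_smul]
      push_cast
      field_simp
    · intro G hG
      rw [Matrix.smul_mul, Matrix.trace_smul]
      have hre := hRe G (hherm G hG)
      have hfG := hfC0 G hG
      have : ((c⁻¹ : ℝ) • (M * G).trace).re = c⁻¹ * ((M * G).trace).re := by
        rw [Complex.real_smul]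
        simp [Complex.mul_re]
      rw [this, hre]
      have hcinv : 0 ≤ c⁻¹ := by positivity
      nlinarith
end

section
/- Let f : ℝ → ℝ be three times differentiable with |f‴(x)| ≤ M for all x, let Δ > 0, σ > 0 and μ ∈ ℝ, and set γ₊ := σ²/(2Δ²) + μ/(2Δ) and γ₋ := σ²/(2Δ²) − μ/(2Δ). Then for every x ∈ ℝ: |γ₊·(f(x + Δ) − f(x)) + γ₋·(f(x − Δ) − f(x)) − (μ·f′(x) + (σ²/2)·f″(x))| ≤ (Δ·(σ² + |μ|·Δ)/6)·M. -/
open Set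

/-- Second-order Taylor bound with third derivative bounded by `M`, forward step. -/
lemma taylor2_aux (f : ℝ → ℝ) (hf1 : Differentiable ℝ f)
    (hf2 : Differentiable ℝ (deriv f)) (hf3 : Differentiable ℝ (deriv (deriv f)))
    (M : ℝ) (hM : ∀ x, |deriv (deriv (deriv f)) x| ≤ M)
    (x h : ℝ) (hh : 0 ≤ h) :
    |f (x + h) - f x - h * deriv f x - h ^ 2 / 2 * deriv (deriv f) x| ≤ M * h ^ 3 / 6 := by
  have hM0 : 0 ≤ M := (abs_nonneg _).trans (hM 0)
  have lip : ∀ a b : ℝ, |deriv (deriv f) b - deriv (deriv f) a| ≤ M * |b - a| := by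
    intro a b
    have := Convex.norm_image_sub_le_of_norm_deriv_le (f := deriv (deriv f)) (C := M)
      (fun y _ => hf3 y) (fun y _ => by simpa using hM y) convex_univ
      (Set.mem_univ a) (Set.mem_univ b)
    simpa using this
  -- first layer: bound on deriv f increments
  have hd1 : ∀ t : ℝ, HasDerivAt (fun t => deriv f (x + t) - deriv f x - t * deriv (deriv f) x)
      (deriv (deriv f) (x + t) - deriv (deriv f) x) t := by
    intro t
    have h1 : HasDerivAt (fun t => deriv f (x + t)) (deriv (deriv f) (x + t)) t := by
      simpa [Function.comp_def] using (HasDerivAt.comp t (hf2 (x + t)).hasDerivAt ((hasDerivAt_id t).const_add x))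
    simpa [Pi.sub_def] using (h1.sub_const (deriv f x)).sub ((hasDerivAt_id t).mul_const (deriv (deriv f) x))
  have hB1 : ∀ t : ℝ, HasDerivAt (fun t : ℝ => M * t ^ 2 / 2) (M * t) t := by
    intro t
    have h := (hasDerivAt_pow 2 t).const_mul (M / 2)
    have he : (fun y : ℝ => M * y ^ 2 / 2) = fun y : ℝ => M / 2 * y ^ 2 := by
      funext y; ring
    rw [he]
    refine h.congr_deriv ?_
    push_cast; ring
  have key1 : ∀ t ∈ Icc (0:ℝ) h,
      |deriv f (x + t) - deriv f x - t * deriv (deriv f) x| ≤ M * t ^ 2 / 2 := by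
    intro t ht
    have := image_norm_le_of_norm_deriv_right_le_deriv_boundary
      (f := fun t => deriv f (x + t) - deriv f x - t * deriv (deriv f) x)
      (f' := fun t => deriv (deriv f) (x + t) - deriv (deriv f) x)
      (a := 0) (b := h) (B := fun t => M * t ^ 2 / 2) (B' := fun t => M * t)
      (fun s _ => (hd1 s).continuousAt.continuousWithinAt)
      (fun s _ => (hd1 s).hasDerivWithinAt)
      (by simp) (fun s => hB1 s)
      (fun s hs => by
        have := lip x (x + s)
        simpa [Real.norm_eq_abs, abs_of_nonneg hs.1] using this) ht
    simpa [Real.norm_eq_abs] using this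
  -- second layer
  have hd2 : ∀ t : ℝ, HasDerivAt
      (fun t => f (x + t) - f x - t * deriv f x - t ^ 2 / 2 * deriv (deriv f) x)
      (deriv f (x + t) - deriv f x - t * deriv (deriv f) x) t := by
    intro t
    have h1 : HasDerivAt (fun t => f (x + t)) (deriv f (x + t)) t := by
      simpa [Function.comp_def] using (HasDerivAt.comp t (hf1 (x + t)).hasDerivAt ((hasDerivAt_id t).const_add x))
    have h2 : HasDerivAt (fun t : ℝ => t ^ 2 / 2 * deriv (deriv f) x)
        (t * deriv (deriv f) x) t := by
      have := ((hasDerivAt_pow 2 t).div_const 2).mul_const (deriv (deriv f) x)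
      refine this.congr_deriv ?_
      push_cast; ring
    simpa [Pi.sub_def] using ((h1.sub_const (f x)).sub ((hasDerivAt_id t).mul_const (deriv f x))).sub h2
  have hB2 : ∀ t : ℝ, HasDerivAt (fun t : ℝ => M * t ^ 3 / 6) (M * t ^ 2 / 2) t := by
    intro t
    have h := (hasDerivAt_pow 3 t).const_mul (M / 6)
    have he : (fun y : ℝ => M * y ^ 3 / 6) = fun y : ℝ => M / 6 * y ^ 3 := by
      funext y; ring
    rw [he]
    refine h.congr_deriv ?_
    push_cast; ring
  have key2 := image_norm_le_of_norm_deriv_right_le_deriv_boundary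
      (f := fun t => f (x + t) - f x - t * deriv f x - t ^ 2 / 2 * deriv (deriv f) x)
      (f' := fun t => deriv f (x + t) - deriv f x - t * deriv (deriv f) x)
      (a := 0) (b := h) (B := fun t => M * t ^ 3 / 6) (B' := fun t => M * t ^ 2 / 2)
      (fun s _ => (hd2 s).continuousAt.continuousWithinAt)
      (fun s _ => (hd2 s).hasDerivWithinAt)
      (by simp) (fun s => hB2 s)
      (fun s hs => by
        simpa [Real.norm_eq_abs] using key1 s ⟨hs.1, le_of_lt hs.2⟩)
      (x := h) ⟨hh, le_refl h⟩
  simpa [Real.norm_eq_abs] using key2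

/-- Generator expansion for the nearest-neighbour jump generator with diffusive
intensity scaling: with `γ₊ = σ²/(2Δ²) + μ/(2Δ)` and `γ₋ = σ²/(2Δ²) − μ/(2Δ)`, the
jump generator applied to a three times differentiable `f` with `|f‴| ≤ M` differs from
the drift-diffusion operator `μ f′ + (σ²/2) f″` by at most `Δ (σ² + |μ| Δ) M / 6`. -/
theorem stmt15 (f : ℝ → ℝ) (hf1 : Differentiable ℝ f)
    (hf2 : Differentiable ℝ (deriv f)) (hf3 : Differentiable ℝ (deriv (deriv f)))
    (M : ℝ) (hM : ∀ x, |deriv (deriv (deriv f)) x| ≤ M)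
    (Δ σ μ : ℝ) (hΔ : 0 < Δ) (hσ : 0 < σ) :
    ∀ x : ℝ,
      |(σ ^ 2 / (2 * Δ ^ 2) + μ / (2 * Δ)) * (f (x + Δ) - f x) +
          (σ ^ 2 / (2 * Δ ^ 2) - μ / (2 * Δ)) * (f (x - Δ) - f x) -
          (μ * deriv f x + σ ^ 2 / 2 * deriv (deriv f) x)| ≤
        Δ * (σ ^ 2 + |μ| * Δ) / 6 * M := by
  intro x
  have hM0 : 0 ≤ M := (abs_nonneg _).trans (hM 0)
  -- forward Taylor bound
  have hA := taylor2_aux f hf1 hf2 hf3 M hM x Δ hΔ.le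
  -- backward Taylor bound via reflection
  set g : ℝ → ℝ := fun y => f (-y) with hg
  have hg1 : Differentiable ℝ g := hf1.comp differentiable_neg
  have hgd1 : deriv g = fun y => -deriv f (-y) := funext fun y => deriv_comp_neg f y
  have hg2 : Differentiable ℝ (deriv g) := by
    rw [hgd1]; exact (hf2.comp differentiable_neg).neg
  have hgd2 : deriv (deriv g) = fun y => deriv (deriv f) (-y) := by
    rw [hgd1]
    funext y
    rw [deriv.fun_neg, deriv_comp_neg (deriv f) y]
    ring
  have hg3 : Differentiable ℝ (deriv (deriv g)) := by
    rw [hgd2]; exact hf3.comp differentiable_neg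
  have hgd3 : ∀ y, deriv (deriv (deriv g)) y = -deriv (deriv (deriv f)) (-y) := by
    intro y
    rw [hgd2, deriv_comp_neg (deriv (deriv f)) y]
  have hgM : ∀ y, |deriv (deriv (deriv g)) y| ≤ M := by
    intro y; rw [hgd3, abs_neg]; exact hM _
  have hB := taylor2_aux g hg1 hg2 hg3 M hgM (-x) Δ hΔ.le
  have e1 : g (-x + Δ) = f (x - Δ) := by
    show f (-(-x + Δ)) = f (x - Δ); congr 1; ring
  have e2 : g (-x) = f x := by show f (- -x) = f x; rw [neg_neg]
  have e3 : deriv g (-x) = -deriv f x := by rw [hgd1]; simp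
  have e4 : deriv (deriv g) (-x) = deriv (deriv f) x := by rw [hgd2]; simp
  rw [e1, e2, e3, e4] at hB
  have hB' : |f (x - Δ) - f x + Δ * deriv f x - Δ ^ 2 / 2 * deriv (deriv f) x| ≤
      M * Δ ^ 3 / 6 := by
    convert hB using 2; ring
  -- algebra: expression equals γ₊ A + γ₋ B
  set A := f (x + Δ) - f x - Δ * deriv f x - Δ ^ 2 / 2 * deriv (deriv f) x with hAdef
  set B := f (x - Δ) - f x + Δ * deriv f x - Δ ^ 2 / 2 * deriv (deriv f) x with hBdef
  have hΔne : (Δ : ℝ) ≠ 0 := hΔ.ne'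
  have hexpr : (σ ^ 2 / (2 * Δ ^ 2) + μ / (2 * Δ)) * (f (x + Δ) - f x) +
      (σ ^ 2 / (2 * Δ ^ 2) - μ / (2 * Δ)) * (f (x - Δ) - f x) -
      (μ * deriv f x + σ ^ 2 / 2 * deriv (deriv f) x) =
      (σ ^ 2 / (2 * Δ ^ 2) + μ / (2 * Δ)) * A + (σ ^ 2 / (2 * Δ ^ 2) - μ / (2 * Δ)) * B := by
    rw [hAdef, hBdef]
    field_simp
    ring
  rw [hexpr]
  have habs1 : |σ ^ 2 / (2 * Δ ^ 2) + μ / (2 * Δ)| ≤ σ ^ 2 / (2 * Δ ^ 2) + |μ| / (2 * Δ) := by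
    refine (abs_add_le _ _).trans ?_
    gcongr
    · rw [abs_of_nonneg (by positivity)]
    · rw [abs_div, abs_of_nonneg (by positivity : (0:ℝ) ≤ 2 * Δ)]
  have habs2 : |σ ^ 2 / (2 * Δ ^ 2) - μ / (2 * Δ)| ≤ σ ^ 2 / (2 * Δ ^ 2) + |μ| / (2 * Δ) := by
    refine (abs_sub _ _).trans ?_
    gcongr
    · rw [abs_of_nonneg (by positivity)]
    · rw [abs_div, abs_of_nonneg (by positivity : (0:ℝ) ≤ 2 * Δ)]
  calc |(σ ^ 2 / (2 * Δ ^ 2) + μ / (2 * Δ)) * A + (σ ^ 2 / (2 * Δ ^ 2) - μ / (2 * Δ)) * B|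
      ≤ |σ ^ 2 / (2 * Δ ^ 2) + μ / (2 * Δ)| * |A| +
        |σ ^ 2 / (2 * Δ ^ 2) - μ / (2 * Δ)| * |B| := by
        refine (abs_add_le _ _).trans ?_
        rw [abs_mul, abs_mul]
    _ ≤ (σ ^ 2 / (2 * Δ ^ 2) + |μ| / (2 * Δ)) * (M * Δ ^ 3 / 6) +
        (σ ^ 2 / (2 * Δ ^ 2) + |μ| / (2 * Δ)) * (M * Δ ^ 3 / 6) := by
        gcongr <;> first | exact hA | exact hB' | positivity
    _ = Δ * (σ ^ 2 + |μ| * Δ) / 6 * M := by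
        field_simp
        ring
end

section
/- Fix n ≥ 1. Let ρ be an n×n positive semidefinite complex matrix with Tr(ρ) = 1, and let X, Y be n×n Hermitian matrices. Set m_X := Re Tr(ρ·X), m_Y := Re Tr(ρ·Y), X̃ := X − m_X·1, Ỹ := Y − m_Y·1, Var(X) := Re Tr(ρ·X̃·X̃) and Var(Y) := Re Tr(ρ·Ỹ·Ỹ). Then Var(X)·Var(Y) ≥ (1/4)·(Re Tr(ρ·(X̃·Ỹ + Ỹ·X̃)))² + (1/4)·|Tr(ρ·(X·Y − Y·X))|². In particular, √(Var(X))·√(Var(Y)) ≥ (1/2)·|Tr(ρ·(X·Y − Y·X))|. -/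
open Matrix
open scoped MatrixOrder

noncomputable def toE (n : ℕ) (M : Matrix (Fin n) (Fin n) ℂ) :
    EuclideanSpace ℂ (Fin n × Fin n) := WithLp.toLp 2 (fun p : Fin n × Fin n => M p.1 p.2)

lemma inner_eq_trace (n : ℕ) (M N : Matrix (Fin n) (Fin n) ℂ) :
    (inner ℂ (toE n M) (toE n N) : ℂ) = (Mᴴ * N).trace := by
  simp [toE, PiLp.inner_apply, Matrix.trace, Matrix.mul_apply, Matrix.conjTranspose_apply,
    Fintype.sum_prod_type, Matrix.diag]
  rw [Finset.sum_comm]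
  exact Finset.sum_congr rfl fun _ _ => Finset.sum_congr rfl fun _ _ => mul_comm _ _

lemma cs_trace (n : ℕ) (A B : Matrix (Fin n) (Fin n) ℂ) :
    ‖(Aᴴ * B).trace‖ ^ 2 ≤ ((Aᴴ * A).trace).re * ((Bᴴ * B).trace).re := by
  set f := toE n A
  set g := toE n B
  have h1 : (inner ℂ f g : ℂ) = (Aᴴ * B).trace := inner_eq_trace n A B
  have h2 : (inner ℂ f f : ℂ) = (Aᴴ * A).trace := inner_eq_trace n A A
  have h3 : (inner ℂ g g : ℂ) = (Bᴴ * B).trace := inner_eq_trace n B B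
  have hcs := norm_inner_le_norm (𝕜 := ℂ) f g
  have hf : ((Aᴴ * A).trace).re = ‖f‖ ^ 2 := by
    rw [← h2, ← inner_self_eq_norm_sq (𝕜 := ℂ)]; rfl
  have hg : ((Bᴴ * B).trace).re = ‖g‖ ^ 2 := by
    rw [← h3, ← inner_self_eq_norm_sq (𝕜 := ℂ)]; rfl
  rw [← h1, hf, hg]
  have : ‖(inner ℂ f g : ℂ)‖ = ‖(inner ℂ f g : ℂ)‖ := rfl
  rw [this]
  nlinarith [norm_nonneg f, norm_nonneg g, norm_nonneg (inner ℂ f g : ℂ)]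

lemma trace_self_nonneg (n : ℕ) (A : Matrix (Fin n) (Fin n) ℂ) :
    0 ≤ ((Aᴴ * A).trace).re := by
  rw [← inner_eq_trace n A A]
  exact inner_self_nonneg (𝕜 := ℂ) (x := toE n A)


open scoped ComplexOrder

/-- Robertson–Schrödinger uncertainty inequality for a state `ρ` (positive semidefinite,
trace one) and Hermitian observables `X`, `Y`, with centered observables
`Xc = X − (Re Tr(ρX)) 1` and `Yc = Y − (Re Tr(ρY)) 1`:
`Var(X) Var(Y) ≥ (1/4)(Re Tr(ρ{Xc,Yc}))² + (1/4)|Tr(ρ[X,Y])|²`,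
and in particular `√Var(X) √Var(Y) ≥ (1/2)|Tr(ρ[X,Y])|`. -/
theorem stmt18 (n : ℕ) (hn : 1 ≤ n) (ρ X Y : Matrix (Fin n) (Fin n) ℂ)
    (hρ : ρ.PosSemidef) (hρtr : ρ.trace = 1)
    (hX : X.IsHermitian) (hY : Y.IsHermitian)
    (Xc Yc : Matrix (Fin n) (Fin n) ℂ)
    (hXc : Xc = X - ((((ρ * X).trace).re : ℂ) • 1))
    (hYc : Yc = Y - ((((ρ * Y).trace).re : ℂ) • 1)) :
    (1 / 4) * (((ρ * (Xc * Yc + Yc * Xc)).trace).re) ^ 2 +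
        (1 / 4) * ‖(ρ * (X * Y - Y * X)).trace‖ ^ 2 ≤
      (((ρ * (Xc * Xc)).trace).re) * (((ρ * (Yc * Yc)).trace).re) ∧
    (1 / 2) * ‖(ρ * (X * Y - Y * X)).trace‖ ≤
      Real.sqrt (((ρ * (Xc * Xc)).trace).re) * Real.sqrt (((ρ * (Yc * Yc)).trace).re) := by
  have hXcH : Xc.IsHermitian := by
    rw [hXc]
    exact hX.sub (by
      simp [Matrix.IsHermitian, Matrix.conjTranspose_smul, Complex.conj_ofReal])
  have hYcH : Yc.IsHermitian := by
    rw [hYc]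
    exact hY.sub (by
      simp [Matrix.IsHermitian, Matrix.conjTranspose_smul, Complex.conj_ofReal])
  set S := CFC.sqrt ρ with hSdef
  have hS2 : S * S = ρ := CFC.sqrt_mul_sqrt_self ρ hρ.nonneg
  have hSH : S.IsHermitian := (CFC.sqrt_nonneg ρ).posSemidef.isHermitian
  -- key trace identity
  have key : ∀ P Q : Matrix (Fin n) (Fin n) ℂ, P.IsHermitian → Q.IsHermitian →
      ((S * P)ᴴ * (S * Q)).trace = (ρ * (Q * P)).trace := by
    intro P Q hP hQ
    rw [Matrix.conjTranspose_mul, hP.eq, hSH.eq]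
    have : P * S * (S * Q) = P * (ρ * Q) := by
      rw [← hS2]; noncomm_ring
    rw [this, Matrix.trace_mul_comm, Matrix.mul_assoc]
  set z := (ρ * (Xc * Yc)).trace with hz
  -- Cauchy–Schwarz
  have hcs : ‖z‖ ^ 2 ≤
      (((ρ * (Xc * Xc)).trace).re) * (((ρ * (Yc * Yc)).trace).re) := by
    have h := cs_trace n (S * Yc) (S * Xc)
    rw [key Yc Xc hYcH hXcH, key Yc Yc hYcH hYcH, key Xc Xc hXcH hXcH] at h
    rw [mul_comm] at h
    exact h
  have hVx : 0 ≤ (((ρ * (Xc * Xc)).trace).re) := by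
    have := trace_self_nonneg n (S * Xc)
    rwa [key Xc Xc hXcH hXcH] at this
  have hVy : 0 ≤ (((ρ * (Yc * Yc)).trace).re) := by
    have := trace_self_nonneg n (S * Yc)
    rwa [key Yc Yc hYcH hYcH] at this
  -- conjugate
  have hconj : (starRingEnd ℂ) z = (ρ * (Yc * Xc)).trace := by
    calc (starRingEnd ℂ) z = ((ρ * (Xc * Yc))ᴴ).trace := by
          rw [Matrix.trace_conjTranspose]; rfl
      _ = ((Yc * Xc) * ρ).trace := by
          rw [Matrix.conjTranspose_mul, Matrix.conjTranspose_mul, hρ.isHermitian.eq,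
            hXcH.eq, hYcH.eq]
      _ = (ρ * (Yc * Xc)).trace := Matrix.trace_mul_comm _ _
  -- commutator identity
  have hcomm : X * Y - Y * X = Xc * Yc - Yc * Xc := by
    rw [hXc, hYc]
    simp only [Matrix.sub_mul, Matrix.mul_sub, Matrix.smul_mul, Matrix.mul_smul,
      Matrix.one_mul, Matrix.mul_one, smul_smul]
    module
  -- commutator trace
  have hcommtr : (ρ * (X * Y - Y * X)).trace = z - (starRingEnd ℂ) z := by
    rw [hcomm, Matrix.mul_sub, Matrix.trace_sub, hconj]
  -- anticommutator trace
  have hanti : (ρ * (Xc * Yc + Yc * Xc)).trace = z + (starRingEnd ℂ) z := by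
    rw [Matrix.mul_add, Matrix.trace_add, hconj]
  have hantire : ((ρ * (Xc * Yc + Yc * Xc)).trace).re = 2 * z.re := by
    rw [hanti, Complex.add_conj]; simp
  have habscomm : ‖(ρ * (X * Y - Y * X)).trace‖ = 2 * |z.im| := by
    rw [hcommtr, Complex.sub_conj]
    simp [abs_mul]
  have habs2 : ‖z‖ ^ 2 = z.re ^ 2 + z.im ^ 2 := by
    rw [Complex.sq_norm, Complex.normSq_apply]; ring
  rw [habs2] at hcs
  constructor
  · rw [hantire, habscomm]
    nlinarith [sq_abs z.im]
  · have h2 : ((1 / 2) * ‖(ρ * (X * Y - Y * X)).trace‖) ^ 2 ≤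
        (((ρ * (Xc * Xc)).trace).re) * (((ρ * (Yc * Yc)).trace).re) := by
      rw [habscomm]
      nlinarith [sq_abs z.im, sq_nonneg z.re]
    have hc : 0 ≤ (1 / 2) * ‖(ρ * (X * Y - Y * X)).trace‖ := by
      positivity
    calc (1 / 2) * ‖(ρ * (X * Y - Y * X)).trace‖
        = Real.sqrt (((1 / 2) * ‖(ρ * (X * Y - Y * X)).trace‖) ^ 2) :=
          (Real.sqrt_sq hc).symm
      _ ≤ Real.sqrt ((((ρ * (Xc * Xc)).trace).re) * (((ρ * (Yc * Yc)).trace).re)) :=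
          Real.sqrt_le_sqrt h2
      _ = Real.sqrt (((ρ * (Xc * Xc)).trace).re) * Real.sqrt (((ρ * (Yc * Yc)).trace).re) :=
          Real.sqrt_mul hVx _
end
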